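/- arXiv:2509.09648 — 3 statements merged into one kernel-verified Lean document; each statement's English description precedes it below -/
import Mathlib

section
/- As p → 1⁺ one has the first-order expansion ‖u_p‖_∞^{p-1} = π²/4 + (π²/4)·c̃·(p-1) + o(p-1), i.e. lim_{p→1⁺} ( ‖u_p‖_∞^{p-1} - π²/4 ) / ( (π²/4)(p-1) ) = c̃, where c̃ := ( ∫_{-1}^{1} cos²(πt/2)·|log(cos(πt/2))| dt ) / ( ∫_{-1}^{1} cos²(πt/2) dt ), and c̃ > 0. -/
open Real Set Filter Topology

noncomputable section

/-- `u` is the (unique) positive solution of the one-dimensional Lane–Emden problem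
`-u'' = u^p` on `(-1,1)` with `u(-1) = u(1) = 0`; it is even, positive on `(-1,1)`,
decreasing on `[0,1]`, and its sup norm is attained at `0`. -/
def IsLaneEmden (p : ℝ) (u : ℝ → ℝ) : Prop :=
  ContDiff ℝ 2 u ∧
  (∀ t ∈ Ioo (-1 : ℝ) 1, deriv (deriv u) t = -(u t ^ p)) ∧
  u (-1) = 0 ∧ u 1 = 0 ∧
  (∀ t ∈ Ioo (-1 : ℝ) 1, 0 < u t) ∧
  (∀ t : ℝ, u (-t) = u t) ∧
  (∀ ⦃s t : ℝ⦄, s ∈ Icc (0 : ℝ) 1 → t ∈ Icc (0 : ℝ) 1 → s ≤ t → u t ≤ u s) ∧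
  (∀ t ∈ Icc (-1 : ℝ) 1, u t ≤ u 0)

/-- The constant `c̃` in the expansion of `‖u_p‖_∞^(p-1)` as `p → 1⁺`. -/
def ctilde : ℝ :=
  (∫ t in (-1 : ℝ)..1, Real.cos (π * t / 2) ^ 2 * |Real.log (Real.cos (π * t / 2))|) /
  (∫ t in (-1 : ℝ)..1, Real.cos (π * t / 2) ^ 2)

/-!
Energy conservation `(p + 1) u'² + 2 u^(p+1) = 2 M^(p+1)`, `M = u 0`, lets one substitute
`(u / M)^((p+1)/2) = sin θ` on `[0, 1]`, along which `θ` moves at the constant speed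
`√((p+1)/2 · M^(p-1))` measured against `sin^ε θ dθ`, `ε = (1-p)/(1+p)`. Hence
`M^(p-1) = 2/(p+1) · W(ε)²` for the Wallis-type integral `W(ε) = ∫₀^{π/2} sin^ε`.
Differentiating under the integral sign gives `W'(0) = ∫₀^{π/2} log sin = -(π/2) log 2`, so
the right-hand side is differentiable at `p = 1`, with value `π²/4` and derivative
`(π²/4)(log 2 - 1/2)`.

Independently, `c̃ = log 2 - 1/2`: the substitution `x = π(t + 1)/2` turns both integrals
defining `c̃` into integrals over `[0, π]` of `sin² x |log sin x|` and `sin² x`, and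
`cos 2x · log sin x` has the elementary primitive `sin x cos x log sin x - x/2 - sin 2x / 4`.
-/

open MeasureTheory intervalIntegral

lemma integral_comp_cos_pi_mul_div_two (f : ℝ → ℝ) :
    ∫ t in (-1 : ℝ)..1, f (cos (π * t / 2)) = 2 / π * ∫ x in 0..π, f (sin x) := by
  have h := integral_comp_mul_add (a := -1) (b := 1) (fun x => f (sin x))
    (div_ne_zero pi_ne_zero two_ne_zero) (π / 2)
  simp only [sin_add_pi_div_two] at h
  convert h using 2 <;> ring_nf

lemma integral_cos_two_mul_mul_log_sin :
    ∫ x in 0..π, cos (2 * x) * log (sin x) = -(π / 2) := by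
  let H : ℝ → ℝ := fun x => cos x * (sin x * log (sin x)) - x / 2 - sin (2 * x) / 4
  have hH : ContinuousOn H (Icc 0 π) := by
    have := continuous_mul_log.comp continuous_sin
    fun_prop
  have hH' : ∀ x ∈ Ioo 0 π, HasDerivAt H (cos (2 * x) * log (sin x)) x := by
    intro x hx
    have hs : sin x ≠ 0 := (sin_pos_of_pos_of_lt_pi hx.1 hx.2).ne'
    have : HasDerivAt H _ x := (((hasDerivAt_cos x).mul ((hasDerivAt_sin x).mul
      ((hasDerivAt_sin x).log hs))).sub ((hasDerivAt_id x).div_const 2)).sub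
      (((hasDerivAt_id x).const_mul 2).sin.div_const 4)
    convert this using 1
    simp only [Pi.mul_apply, id, cos_two_mul]
    field_simp
    linear_combination 8 * log (sin x) * sin_sq_add_cos_sq x
  have hint : IntervalIntegrable (fun x => cos (2 * x) * log (sin x)) volume 0 π :=
    (intervalIntegrable_log_sin (a := 0) (b := π)).continuousOn_mul
      (g := fun x => cos (2 * x)) (by fun_prop)
  rw [integral_eq_sub_of_hasDerivAt_of_le pi_pos.le hH hH' hint]
  simp [H]

lemma integral_sin_sq_mul_abs_log_sin :
    ∫ x in 0..π, sin x ^ 2 * |log (sin x)| = π / 2 * log 2 - π / 4 := by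
  have hlog : IntervalIntegrable (fun x => log (sin x)) volume 0 π :=
    intervalIntegrable_log_sin
  have hcos : IntervalIntegrable (fun x => cos (2 * x) * log (sin x)) volume 0 π :=
    hlog.continuousOn_mul (g := fun x => cos (2 * x)) (by fun_prop)
  have hpoint : EqOn (fun x => sin x ^ 2 * |log (sin x)|)
      (fun x => (cos (2 * x) * log (sin x) - log (sin x)) / 2) (uIcc 0 π) := by
    intro x hx
    rw [uIcc_of_le pi_pos.le] at hx
    have hs := sin_nonneg_of_nonneg_of_le_pi hx.1 hx.2
    simp only [abs_of_nonpos (log_nonpos hs (sin_le_one x)), cos_two_mul, cos_sq']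
    ring
  rw [integral_congr hpoint, intervalIntegral.integral_div, integral_sub hcos hlog,
    integral_cos_two_mul_mul_log_sin, integral_log_sin_zero_pi]
  ring

lemma ctilde_eq : ctilde = log 2 - 1 / 2 := by
  have hden : ∫ x in 0..π, sin x ^ 2 = π / 2 := by simp [integral_sin_sq]
  rw [ctilde, integral_comp_cos_pi_mul_div_two (fun y => y ^ 2 * |log y|),
    integral_comp_cos_pi_mul_div_two (fun y => y ^ 2), integral_sin_sq_mul_abs_log_sin, hden]
  field_simp
  ring

lemma sin_pos_of_mem_Ioc_pi_div_two {x : ℝ} (hx : x ∈ Ioc 0 (π / 2)) : 0 < sin x :=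
  sin_pos_of_pos_of_lt_pi hx.1 (hx.2.trans_lt (by linarith [pi_pos]))

lemma intervalIntegrable_sin_rpow {r : ℝ} (hr : -1 < r) :
    IntervalIntegrable (fun x => sin x ^ r) volume 0 (π / 2) := by
  rcases le_or_gt 0 r with hr0 | hr0
  · exact (continuous_sin.rpow_const fun _ => Or.inr hr0).intervalIntegrable _ _
  -- Jordan's inequality `2x/π ≤ sin x` dominates `sin x ^ r` by a multiple of `x ^ r`.
  refine ((intervalIntegrable_rpow' hr).const_mul ((2 / π) ^ r)).mono_fun
    (continuous_sin.measurable.pow_const r).aestronglyMeasurable ?_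
  filter_upwards [ae_restrict_mem measurableSet_uIoc] with x hx
  rw [uIoc_of_le (by positivity)] at hx
  have hs := sin_pos_of_mem_Ioc_pi_div_two hx
  have hx' : 0 < 2 / π * x := mul_pos (div_pos two_pos pi_pos) hx.1
  rw [← mul_rpow (by positivity) hx.1.le, norm_of_nonneg (rpow_nonneg hs.le r),
    norm_of_nonneg (rpow_nonneg hx'.le r)]
  exact rpow_le_rpow_of_nonpos hx' (mul_le_sin hx.1.le hx.2) hr0.le

def wallisIntegral (r : ℝ) : ℝ := ∫ x in 0..π / 2, sin x ^ r

lemma wallisIntegral_zero : wallisIntegral 0 = π / 2 := by simp [wallisIntegral]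

lemma abs_rpow_mul_log_le {y r : ℝ} (hy0 : 0 < y) (hy1 : y ≤ 1) (hr : -(1 / 2) ≤ r) :
    |y ^ r * log y| ≤ 4 * y ^ (-(3 / 4) : ℝ) := by
  have hlog := (abs_log_mul_self_rpow_lt y (1 / 4) hy0 hy1 (by norm_num)).le
  have hpow : y ^ r ≤ y ^ (-(3 / 4) : ℝ) * y ^ (1 / 4 : ℝ) := by
    rw [← rpow_add hy0]
    exact rpow_le_rpow_of_exponent_ge hy0 hy1 (by linarith)
  calc |y ^ r * log y| = y ^ r * |log y| := by rw [abs_mul, abs_of_pos (rpow_pos_of_pos hy0 r)]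
    _ ≤ y ^ (-(3 / 4) : ℝ) * |log y * y ^ (1 / 4 : ℝ)| := by
      rw [abs_mul, abs_of_pos (rpow_pos_of_pos hy0 _)]
      nlinarith [hpow, abs_nonneg (log y), rpow_pos_of_pos hy0 (-(3 / 4) : ℝ)]
    _ ≤ 4 * y ^ (-(3 / 4) : ℝ) := by
      nlinarith [hlog, rpow_pos_of_pos hy0 (-(3 / 4) : ℝ)]

lemma hasDerivAt_wallisIntegral_zero : HasDerivAt wallisIntegral (-log 2 * π / 2) 0 := by
  have hdiff := hasDerivAt_integral_of_dominated_loc_of_deriv_le (μ := volume) (a := 0) (b := π / 2)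
    (F := fun r x => sin x ^ r) (F' := fun r x => sin x ^ r * log (sin x))
    (bound := fun x => 4 * sin x ^ (-(3 / 4) : ℝ)) (x₀ := 0)
    (Ioo_mem_nhds (by norm_num : -(1 / 2 : ℝ) < 0) one_half_pos)
    (Eventually.of_forall fun r => (continuous_sin.measurable.pow_const r).aestronglyMeasurable)
    (by simp) ?_ ?_ ((intervalIntegrable_sin_rpow (by norm_num)).const_mul 4) ?_
  · have h := hdiff.2
    simp only [rpow_zero, one_mul, integral_log_sin_zero_pi_div_two] at h
    exact h
  · exact (continuous_sin.measurable.pow_const 0 |>.mul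
      (measurable_log.comp continuous_sin.measurable)).aestronglyMeasurable
  · refine Eventually.of_forall fun x hx r hr => ?_
    rw [uIoc_of_le (by positivity)] at hx
    exact abs_rpow_mul_log_le (sin_pos_of_mem_Ioc_pi_div_two hx) (sin_le_one x) hr.1.le
  · refine Eventually.of_forall fun x hx r _ => ?_
    rw [uIoc_of_le (by positivity)] at hx
    exact (hasStrictDerivAt_const_rpow (sin_pos_of_mem_Ioc_pi_div_two hx) r).hasDerivAt

lemma hasDerivAt_integral_sin_rpow_arcsin {f : ℝ → ℝ} {c q t : ℝ} (hq : 0 < q)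
    (hf : HasDerivAt f (-(c * sqrt (1 - (f t ^ q) ^ 2))) t) (h0 : 0 < f t) (h1 : f t < 1) :
    HasDerivAt (fun s => ∫ x in 0..arcsin (f s ^ q), sin x ^ (q⁻¹ - 1)) (-(c * q)) t := by
  set v := f t ^ q
  have hv0 : 0 < v := rpow_pos_of_pos h0 q
  have hv1 : v < 1 := rpow_lt_one h0.le h1 hq
  have hθ0 : 0 < arcsin v := arcsin_pos.2 hv0
  have hθ1 : arcsin v < π / 2 := arcsin_lt_pi_div_two.2 hv1
  have hsinθ : sin (arcsin v) = v := sin_arcsin (by linarith) hv1.le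
  have hP : HasDerivAt (fun y => ∫ x in 0..y, sin x ^ (q⁻¹ - 1)) (sin (arcsin v) ^ (q⁻¹ - 1))
      (arcsin v) := by
    refine integral_hasDerivAt_right ?_
      (continuous_sin.measurable.pow_const _).stronglyMeasurable.stronglyMeasurableAtFilter
      ((continuousAt_rpow_const _ _ (Or.inl (hsinθ.symm ▸ hv0.ne'))).comp
        continuous_sin.continuousAt)
    refine (intervalIntegrable_sin_rpow (by linarith [inv_pos.2 hq])).mono_set ?_
    rw [uIcc_of_le hθ0.le, uIcc_of_le (by positivity)]
    exact Icc_subset_Icc le_rfl hθ1.le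
  have hθ := (hasDerivAt_arcsin (by linarith) hv1.ne).comp t (hf.rpow_const (Or.inl h0.ne'))
  refine (hP.comp t hθ).congr_deriv ?_
  have hsqrt : sqrt (1 - v ^ 2) ≠ 0 := (sqrt_pos.2 (by nlinarith)).ne'
  have hchain : 1 / sqrt (1 - v ^ 2) * (-(c * sqrt (1 - v ^ 2)) * q * f t ^ (q - 1)) =
      -(c * q * f t ^ (q - 1)) := by
    field_simp
  have hpow : v ^ (q⁻¹ - 1) * f t ^ (q - 1) = 1 := by
    rw [← rpow_mul h0.le, ← rpow_add h0, mul_sub, mul_inv_cancel₀ hq.ne']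
    norm_num
  rw [hsinθ, hchain]
  linear_combination -(c * q) * hpow

lemma deriv_zero_of_even {f : ℝ → ℝ} (hf : ∀ t, f (-t) = f t) : deriv f 0 = 0 := by
  have h := deriv_comp_neg (f := f) (x := 0)
  simp only [hf, neg_zero] at h
  linarith

namespace IsLaneEmden

variable {p : ℝ} {u : ℝ → ℝ}

lemma apply_zero_pos (h : IsLaneEmden p u) : 0 < u 0 :=
  have ⟨_, _, _, _, hpos, _⟩ := h
  hpos 0 (by norm_num)

lemma differentiable (h : IsLaneEmden p u) : Differentiable ℝ u :=
  h.1.differentiable (by norm_num)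

lemma differentiable_deriv (h : IsLaneEmden p u) : Differentiable ℝ (deriv u) :=
  ((contDiff_succ_iff_deriv (n := 1)).1 h.1).2.2.differentiable one_ne_zero

lemma energy (h : IsLaneEmden p u) {t : ℝ} (ht : t ∈ Ioo (-1) 1) :
    (p + 1) * deriv u t ^ 2 + 2 * u t ^ (p + 1) = 2 * u 0 ^ (p + 1) := by
  have ⟨_, hode, _, _, hpos, heven, _⟩ := h
  let E : ℝ → ℝ := fun s => (p + 1) * deriv u s ^ 2 + 2 * u s ^ (p + 1)
  have hE : ∀ s ∈ Ioo (-1 : ℝ) 1, HasDerivAt E 0 s := by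
    intro s hs
    have : HasDerivAt E _ s :=
      (((h.differentiable_deriv s).hasDerivAt.pow 2).const_mul (p + 1)).add
        (((h.differentiable s).hasDerivAt.rpow_const (p := p + 1)
          (Or.inl (hpos s hs).ne')).const_mul 2)
    convert this using 1
    rw [hode s hs, add_sub_cancel_right]
    ring
  have hconst := isOpen_Ioo.is_const_of_deriv_eq_zero isPreconnected_Ioo
    (fun s hs => (hE s hs).differentiableAt.differentiableWithinAt)
    (fun s hs => (hE s hs).deriv) ht (by norm_num : (0 : ℝ) ∈ Ioo (-1) 1)
  simpa [E, deriv_zero_of_even heven] using hconst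

lemma deriv_neg (h : IsLaneEmden p u) {t : ℝ} (ht : t ∈ Ioo 0 1) : deriv u t < 0 := by
  have ⟨_, hode, _, _, hpos, heven, _⟩ := h
  have hanti : StrictAntiOn (deriv u) (Icc (-1) 1) := by
    refine strictAntiOn_of_deriv_neg (convex_Icc _ _)
      h.differentiable_deriv.continuous.continuousOn fun s hs => ?_
    rw [interior_Icc] at hs
    rw [hode s hs, neg_lt_zero]
    exact rpow_pos_of_pos (hpos s hs) p
  have := hanti (by norm_num) ⟨by linarith [ht.1], ht.2.le⟩ ht.1
  rwa [deriv_zero_of_even heven] at this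

lemma lt_apply_zero (h : IsLaneEmden p u) {t : ℝ} (ht : t ∈ Ioo 0 1) : u t < u 0 := by
  have hanti : StrictAntiOn u (Icc 0 1) := by
    refine strictAntiOn_of_deriv_neg (convex_Icc _ _) h.differentiable.continuous.continuousOn
      fun s hs => ?_
    rw [interior_Icc] at hs
    exact h.deriv_neg hs
  exact hanti (by norm_num) ⟨ht.1.le, ht.2.le⟩ ht.1

lemma nonneg (h : IsLaneEmden p u) {t : ℝ} (ht : t ∈ Icc 0 1) : 0 ≤ u t :=
  have ⟨_, _, _, h1, _, _, hanti, _⟩ := h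
  h1 ▸ hanti ht (by norm_num) ht.2

lemma deriv_div_apply_zero (h : IsLaneEmden p u) (hp : -1 < p) {t : ℝ} (ht : t ∈ Ioo 0 1) :
    deriv u t / u 0 = -(sqrt (2 / (p + 1) * u 0 ^ (p - 1)) *
      sqrt (1 - ((u t / u 0) ^ ((p + 1) / 2)) ^ 2)) := by
  have hM := h.apply_zero_pos
  have hp1 : 0 < p + 1 := by linarith
  have hut : 0 ≤ u t := h.nonneg (Ioo_subset_Icc_self ht)
  have hsq : ((u t / u 0) ^ ((p + 1) / 2)) ^ 2 = u t ^ (p + 1) / u 0 ^ (p + 1) := by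
    rw [← rpow_natCast, ← rpow_mul (by positivity), div_rpow hut hM.le]
    norm_num
  have hMpow : u 0 ^ (p + 1) = u 0 ^ (p - 1) * u 0 ^ 2 := by
    rw [← rpow_natCast, ← rpow_add hM]
    congr 1
    push_cast
    ring
  have henergy := h.energy ⟨by linarith [ht.1], ht.2⟩
  have hsq' : (deriv u t / u 0) ^ 2 =
      2 / (p + 1) * u 0 ^ (p - 1) * (1 - ((u t / u 0) ^ ((p + 1) / 2)) ^ 2) := by
    rw [hsq, hMpow]
    field_simp
    linear_combination henergy + 2 * hMpow
  rw [← sqrt_mul (by positivity), ← hsq', sqrt_sq_eq_abs,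
    abs_of_neg (div_neg_of_neg_of_pos (h.deriv_neg ht) hM), neg_neg]

lemma wallisIntegral_eq (h : IsLaneEmden p u) (hp : -1 < p) :
    wallisIntegral ((1 - p) / (1 + p)) = sqrt (2 / (p + 1) * u 0 ^ (p - 1)) * ((p + 1) / 2) := by
  have ⟨_, _, _, h1, hpos, _⟩ := h
  have hM := h.apply_zero_pos
  set q := (p + 1) / 2 with hq_def
  have hq : 0 < q := by linarith
  set c := sqrt (2 / (p + 1) * u 0 ^ (p - 1))
  have hε : q⁻¹ - 1 = (1 - p) / (1 + p) := by
    rw [hq_def, inv_div, div_sub_one (by linarith), add_comm p 1]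
    ring
  -- `Φ` reparametrizes `[0, 1]` by the angle `θ` with `sin θ = (u / u 0) ^ q`.
  let Φ : ℝ → ℝ := fun s => ∫ x in 0..arcsin ((u s / u 0) ^ q), sin x ^ (q⁻¹ - 1)
  have hΦ0 : Φ 0 = wallisIntegral ((1 - p) / (1 + p)) := by
    simp [Φ, div_self hM.ne', wallisIntegral, hε]
  have hΦ1 : Φ 1 = 0 := by
    simp [Φ, h1, zero_rpow hq.ne']
  have hΦ' : ∀ t ∈ Ioo (0 : ℝ) 1, HasDerivAt Φ (-(c * q)) t := by
    intro t ht
    have hf : HasDerivAt (fun s => u s / u 0) (deriv u t / u 0) t :=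
      (h.differentiable t).hasDerivAt.div_const _
    rw [h.deriv_div_apply_zero hp ht] at hf
    exact hasDerivAt_integral_sin_rpow_arcsin hq hf
      (div_pos (hpos t ⟨by linarith [ht.1], ht.2⟩) hM)
      ((div_lt_one hM).2 (h.lt_apply_zero ht))
  have hΦcont : ContinuousOn Φ (Icc 0 1) := by
    have hprim := continuousOn_primitive_interval'
      (intervalIntegrable_sin_rpow (r := q⁻¹ - 1) (by linarith [inv_pos.2 hq])) left_mem_uIcc
    rw [uIcc_of_le (by positivity)] at hprim
    refine hprim.comp (continuous_arcsin.comp_continuousOn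
      ((h.differentiable.continuous.div_const _).rpow_const fun _ => Or.inr hq.le).continuousOn)
      fun s hs => ?_
    exact ⟨arcsin_nonneg.2 (rpow_nonneg (div_nonneg (h.nonneg hs) hM.le) _),
      arcsin_le_pi_div_two _⟩
  have := integral_eq_sub_of_hasDerivAt_of_le zero_le_one hΦcont hΦ' intervalIntegrable_const
  rw [hΦ0, hΦ1] at this
  simpa using this.symm

lemma apply_zero_rpow_sub_one (h : IsLaneEmden p u) (hp : -1 < p) :
    u 0 ^ (p - 1) = 2 / (p + 1) * wallisIntegral ((1 - p) / (1 + p)) ^ 2 := by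
  have hp1 : 0 < p + 1 := by linarith
  rw [h.wallisIntegral_eq hp, mul_pow, sq_sqrt (by positivity [h.apply_zero_pos])]
  field_simp

end IsLaneEmden

lemma hasDerivAt_wallisIntegral_expansion :
    HasDerivAt (fun p => 2 / (p + 1) * wallisIntegral ((1 - p) / (1 + p)) ^ 2)
      (π ^ 2 / 4 * (log 2 - 1 / 2)) 1 := by
  have hε : HasDerivAt (fun p : ℝ => (1 - p) / (1 + p)) (-(1 / 2)) 1 :=
    (((hasDerivAt_id' 1).const_sub 1).div ((hasDerivAt_id' 1).const_add 1)
      (by norm_num)).congr_deriv (by norm_num)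
  have hε1 : ((1 : ℝ) - 1) / (1 + 1) = 0 := by norm_num
  have hW0 := hasDerivAt_wallisIntegral_zero
  rw [← hε1] at hW0
  have hW := hW0.comp 1 hε
  refine (((hasDerivAt_const (1 : ℝ) (2 : ℝ)).div ((hasDerivAt_id' 1).add_const 1)
    (by norm_num)).mul (hW.pow 2)).congr_deriv ?_
  simp only [Pi.pow_apply, Pi.div_apply, Function.comp_apply, hε1, wallisIntegral_zero]
  ring

lemma tendsto_sub_div_mul_sub_of_hasDerivAt {f : ℝ → ℝ} {f' a : ℝ} (hf : HasDerivAt f f' a)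
    (c : ℝ) : Tendsto (fun x => (f x - f a) / (c * (x - a))) (𝓝[≠] a) (𝓝 (f' / c)) := by
  refine ((hasDerivAt_iff_tendsto_slope.1 hf).div_const c).congr fun x => ?_
  rw [slope_def_field, div_div, mul_comm]

/-- First-order expansion `‖u_p‖_∞^(p-1) = π²/4 + (π²/4) c̃ (p-1) + o(p-1)` as `p → 1⁺`,
with `c̃ > 0`. -/
theorem sup_norm_pow_expansion_p_to_one
    (u : ℝ → ℝ → ℝ) (hu : ∀ p : ℝ, 1 < p → IsLaneEmden p (u p)) :
    0 < ctilde ∧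
    Tendsto (fun p : ℝ => (u p 0 ^ (p - 1) - π ^ 2 / 4) / (π ^ 2 / 4 * (p - 1)))
      (𝓝[>] (1 : ℝ)) (𝓝 ctilde) := by
  refine ⟨by rw [ctilde_eq]; linarith [log_two_gt_d9], ?_⟩
  have hlim := (tendsto_sub_div_mul_sub_of_hasDerivAt hasDerivAt_wallisIntegral_expansion
    (π ^ 2 / 4)).mono_left (nhdsGT_le_nhdsNE 1)
  have hval : 2 / (1 + 1) * wallisIntegral ((1 - 1) / (1 + 1)) ^ 2 = π ^ 2 / 4 := by
    norm_num [wallisIntegral_zero, div_pow]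
  rw [hval, mul_div_cancel_left₀ _ (by positivity), ← ctilde_eq] at hlim
  refine hlim.congr' ?_
  filter_upwards [self_mem_nhdsWithin] with p hp
  rw [(hu p hp).apply_zero_rpow_sub_one (by linarith [mem_Ioi.1 hp])]
end
end

section
/- Let p > 1 and let λ > 0 satisfy λ > -α₁(p). If h is a C² function on [0,1] solving h'' = (λ - p·u_p^{p-1})·h on (0,1) with h'(0) = 0 and h(1) = -u_p'(1), then h is strictly positive on [0,1]. -/
/-!
Let `g(t) = w(t) + w(-t)` be the symmetrised first Dirichlet eigenfunction, so that
`g'' = -(α + p u^{p-1}) g`, `g > 0` on `(-1, 1)` and `g'(0) = 0`. For a solution `f` of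
`f'' = (λ - p u^{p-1}) f` with `f'(0) = 0`, the Wronskian `W = f g' - f' g` vanishes at `0` and
`W' = -(λ + α) f g`. If `f(0) > 0` and `c` were a first zero of `f`, then `W` would decrease
strictly on `[0, c]`, while `W(c) = -f'(c) g(c) ≥ 0`; so `f` stays positive on `[0, 1]` (Sturm
comparison). Applied to `-h`, this excludes `h(0) < 0` because `h(1) = -u'(1) > 0`, and
`h(0) = 0 = h'(0)` would force `h ≡ 0` by Grönwall's inequality.
-/

open Real Set Filter Topology

noncomputable section

/-- `α` is the first eigenvalue of the linearized operator `-d²/dt² - p u^(p-1)`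
with Dirichlet boundary conditions on `(-1,1)`, characterized by the existence of a
positive eigenfunction. -/
def IsFirstEig (p : ℝ) (u : ℝ → ℝ) (α : ℝ) : Prop :=
  ∃ w : ℝ → ℝ, ContDiff ℝ 2 w ∧
    (∀ t ∈ Ioo (-1 : ℝ) 1, 0 < w t) ∧
    w (-1) = 0 ∧ w 1 = 0 ∧
    (∀ t ∈ Ioo (-1 : ℝ) 1, -(deriv (deriv w) t) - p * u t ^ (p - 1) * w t = α * w t)

lemma ContDiff.differentiable_deriv_of_two {f : ℝ → ℝ} (hf : ContDiff ℝ 2 f) :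
    Differentiable ℝ (deriv f) :=
  (hf.deriv' (n := 1)).differentiable one_ne_zero

lemma Function.Even.deriv_zero {f : ℝ → ℝ} (hf : Function.Even f) : deriv f 0 = 0 := by
  have h := deriv_comp_neg (f := f) (x := 0)
  rw [show (fun x => f (-x)) = f from funext hf, neg_zero] at h
  linarith

def wronskian (f g : ℝ → ℝ) (t : ℝ) : ℝ := f t * deriv g t - deriv f t * g t

section SecondOrderLinear

variable {f g q r : ℝ → ℝ} {a b : ℝ}

lemma hasDerivAt_wronskian (hf : ContDiff ℝ 2 f) (hg : ContDiff ℝ 2 g) (t : ℝ) :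
    HasDerivAt (wronskian f g) (f t * deriv (deriv g) t - deriv (deriv f) t * g t) t := by
  have := ((hf.differentiable two_ne_zero t).hasDerivAt.mul
    (hg.differentiable_deriv_of_two t).hasDerivAt).sub
    ((hf.differentiable_deriv_of_two t).hasDerivAt.mul (hg.differentiable two_ne_zero t).hasDerivAt)
  exact this.congr_deriv (by ring)

lemma deriv_nonpos_of_pos_of_eq_zero (hab : a < b) (hf : DifferentiableAt ℝ f b)
    (hpos : ∀ t ∈ Ioo a b, 0 < f t) (hb : f b = 0) : deriv f b ≤ 0 := by
  have hslope : Tendsto (slope f b) (𝓝[<] b) (𝓝 (deriv f b)) := by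
    simpa using hasDerivWithinAt_iff_tendsto_slope.mp (hf.hasDerivAt.hasDerivWithinAt (s := Iio b))
  refine le_of_tendsto (x := 𝓝[<] b) hslope ?_
  filter_upwards [Ioo_mem_nhdsLT hab] with t ht
  rw [slope_def_field, hb, sub_zero]
  exact div_nonpos_of_nonneg_of_nonpos (hpos t ht).le (by linarith [ht.2])

theorem sturm_comparison (hab : a < b) (hf : ContDiff ℝ 2 f) (hg : ContDiff ℝ 2 g)
    (hf'' : ∀ t ∈ Ioo a b, deriv (deriv f) t = q t * f t)
    (hg'' : ∀ t ∈ Ioo a b, deriv (deriv g) t = r t * g t) (hrq : ∀ t ∈ Ioo a b, r t < q t)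
    (hWa : wronskian f g a ≤ 0) (hfpos : ∀ t ∈ Ioo a b, 0 < f t)
    (hgpos : ∀ t ∈ Ioo a b, 0 < g t) : f b ≠ 0 := by
  intro hfb
  have hW_anti : StrictAntiOn (wronskian f g) (Icc a b) := by
    refine strictAntiOn_of_deriv_neg (convex_Icc a b)
      (fun t _ => (hasDerivAt_wronskian hf hg t).continuousAt.continuousWithinAt) fun t ht => ?_
    rw [interior_Icc] at ht
    rw [(hasDerivAt_wronskian hf hg t).deriv, hf'' t ht, hg'' t ht]
    nlinarith [mul_pos (hfpos t ht) (hgpos t ht), hrq t ht]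
  have hgb : 0 ≤ g b := by
    refine ge_of_tendsto ((hg.continuous.tendsto b).mono_left (nhdsWithin_le_nhds (s := Iio b))) ?_
    filter_upwards [Ioo_mem_nhdsLT hab] with t ht using (hgpos t ht).le
  have hf'b : deriv f b ≤ 0 :=
    deriv_nonpos_of_pos_of_eq_zero hab (hf.differentiable two_ne_zero b) hfpos hfb
  have hWb : 0 ≤ wronskian f g b := by
    rw [wronskian, hfb]
    nlinarith
  linarith [hW_anti (left_mem_Icc.2 hab.le) (right_mem_Icc.2 hab.le) hab]

lemma exists_first_zero (hab : a ≤ b) (hf : ContinuousOn f (Icc a b)) (ha : 0 < f a)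
    (hb : f b ≤ 0) : ∃ c ∈ Ioc a b, f c = 0 ∧ ∀ t ∈ Ioo a c, 0 < f t := by
  set S := Icc a b ∩ f ⁻¹' Iic 0
  have hbdd : BddBelow S := ⟨a, fun t ht => ht.1.1⟩
  have hcS : sInf S ∈ S :=
    (hf.preimage_isClosed_of_isClosed isClosed_Icc isClosed_Iic).csInf_mem
      ⟨b, ⟨right_mem_Icc.2 hab, hb⟩⟩ hbdd
  set c := sInf S
  have hac : a < c := hcS.1.1.lt_of_ne fun hac => (hac ▸ hcS.2 : f a ≤ 0).not_gt ha
  obtain ⟨d, hd, hfd⟩ := intermediate_value_Icc' hcS.1.1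
    (hf.mono (Icc_subset_Icc le_rfl hcS.1.2)) ⟨hcS.2, ha.le⟩
  have hdc : d = c := le_antisymm hd.2 (csInf_le hbdd ⟨⟨hd.1, hd.2.trans hcS.1.2⟩, hfd.le⟩)
  refine ⟨c, ⟨hac, hcS.1.2⟩, hdc ▸ hfd, fun t ht => not_le.1 fun hft => ?_⟩
  exact (csInf_le hbdd ⟨⟨ht.1.le, ht.2.le.trans hcS.1.2⟩, hft⟩).not_gt ht.2

theorem pos_of_pos_of_wronskian_nonpos (hf : ContDiff ℝ 2 f) (hg : ContDiff ℝ 2 g)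
    (hf'' : ∀ t ∈ Ioo a b, deriv (deriv f) t = q t * f t)
    (hg'' : ∀ t ∈ Ioo a b, deriv (deriv g) t = r t * g t) (hrq : ∀ t ∈ Ioo a b, r t < q t)
    (hgpos : ∀ t ∈ Ioo a b, 0 < g t) (hWa : wronskian f g a ≤ 0) (hfa : 0 < f a) :
    ∀ t ∈ Icc a b, 0 < f t := by
  intro t ht
  by_contra! hft
  obtain ⟨c, hc, hfc, hfpos⟩ := exists_first_zero ht.1 hf.continuous.continuousOn hfa hft
  have hsub : Ioo a c ⊆ Ioo a b := Ioo_subset_Ioo_right (hc.2.trans ht.2)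
  exact sturm_comparison hc.1 hf hg (fun s hs => hf'' s (hsub hs)) (fun s hs => hg'' s (hsub hs))
    (fun s hs => hrq s (hsub hs)) hWa hfpos (fun s hs => hgpos s (hsub hs)) hfc

theorem eq_zero_of_deriv_deriv_eq_mul_of_eq_zero {C : ℝ} (hf : ContDiff ℝ 2 f)
    (hf'' : ∀ t ∈ Ioo a b, deriv (deriv f) t = q t * f t) (hq : ∀ t ∈ Ioo a b, |q t| ≤ C)
    (hfa : f a = 0) (hf'a : deriv f a = 0) : ∀ t ∈ Icc a b, f t = 0 := by
  set E : ℝ → ℝ := fun t => f t ^ 2 + deriv f t ^ 2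
  have hE : ∀ t, HasDerivAt E (2 * f t * deriv f t + 2 * deriv f t * deriv (deriv f) t) t := by
    intro t
    have := ((hf.differentiable two_ne_zero t).hasDerivAt.pow 2).add
      ((hf.differentiable_deriv_of_two t).hasDerivAt.pow 2)
    exact this.congr_deriv (by push_cast; ring)
  have hE0 : ∀ t ∈ Icc a b, E t = 0 := by
    refine eq_zero_of_abs_deriv_le_mul_abs_self_of_eq_zero_right (K := 1 + C)
      (fun t _ => (hE t).continuousAt.continuousWithinAt) (fun t _ => (hE t).hasDerivWithinAt)
      (by simp [E, hfa, hf'a]) ?_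
    rintro t ⟨hat, htb⟩
    -- the equation is only known on `Ioo a b`, but `E'` vanishes at `a` since `f a = f' a = 0`
    rcases hat.eq_or_lt with rfl | hat
    · simp [E, hfa, hf'a]
    have hfE : |2 * f t * deriv f t| ≤ E t :=
      abs_le.2 ⟨by nlinarith [sq_nonneg (f t + deriv f t)],
        by nlinarith [sq_nonneg (f t - deriv f t)]⟩
    have hqC : |1 + q t| ≤ 1 + C := (abs_add_le 1 (q t)).trans (by simp [hq t ⟨hat, htb⟩])
    rw [hf'' t ⟨hat, htb⟩, Real.norm_eq_abs, Real.norm_eq_abs,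
      abs_of_nonneg (by positivity : 0 ≤ E t)]
    calc |2 * f t * deriv f t + 2 * deriv f t * (q t * f t)|
        = |2 * f t * deriv f t| * |1 + q t| := by rw [← abs_mul]; ring_nf
      _ ≤ E t * (1 + C) := mul_le_mul hfE hqC (abs_nonneg _) (by positivity)
      _ = (1 + C) * E t := mul_comm _ _
  intro t ht
  nlinarith [hE0 t ht, sq_nonneg (f t), sq_nonneg (deriv f t)]

end SecondOrderLinear

lemma deriv_deriv_add_comp_neg {V w : ℝ → ℝ} {c : ℝ} (hV : Function.Even V)
    (hw : ContDiff ℝ 2 w) (hw'' : ∀ t ∈ Ioo (-c) c, deriv (deriv w) t = V t * w t) :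
    ∀ t ∈ Ioo (-c) c, deriv (deriv fun s => w s + w (-s)) t = V t * (w t + w (-t)) := by
  have hw' := hw.differentiable two_ne_zero
  have hw₂ := hw.differentiable_deriv_of_two
  have hd : deriv (fun s => w s + w (-s)) = fun s => deriv w s - deriv w (-s) := funext fun s => by
    rw [deriv_fun_add (g := fun s => w (-s)) (hw' s) ((hw' (-s)).comp s (differentiable_neg s)),
      deriv_comp_neg]
    ring
  intro t ht
  rw [hd, deriv_fun_sub (g := fun s => deriv w (-s)) (hw₂ t)
      ((hw₂ (-t)).comp t (differentiable_neg t)), deriv_comp_neg,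
    hw'' t ht, hw'' (-t) ⟨by linarith [ht.2], by linarith [ht.1]⟩, hV t]
  ring

theorem IsFirstEig.exists_even_eigenfunction {p α : ℝ} {u : ℝ → ℝ} (hu : Function.Even u)
    (hα : IsFirstEig p u α) :
    ∃ g : ℝ → ℝ, ContDiff ℝ 2 g ∧ Function.Even g ∧ (∀ t ∈ Ioo (-1 : ℝ) 1, 0 < g t) ∧
      ∀ t ∈ Ioo (-1 : ℝ) 1, deriv (deriv g) t = -(α + p * u t ^ (p - 1)) * g t := by
  obtain ⟨w, hw, hw_pos, -, -, hw''⟩ := hα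
  have hneg : ∀ t ∈ Ioo (-1 : ℝ) 1, -t ∈ Ioo (-1 : ℝ) 1 := fun t ht =>
    ⟨by linarith [ht.2], by linarith [ht.1]⟩
  refine ⟨fun s => w s + w (-s), hw.add (hw.comp contDiff_neg), fun t => by simp [add_comm],
    fun t ht => add_pos (hw_pos t ht) (hw_pos (-t) (hneg t ht)), ?_⟩
  refine deriv_deriv_add_comp_neg (fun t => by simp [hu t]) hw fun t ht => ?_
  linarith [hw'' t ht]

lemma IsLaneEmden.deriv_one_neg {p : ℝ} {u : ℝ → ℝ} (hu : IsLaneEmden p u) : deriv u 1 < 0 := by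
  obtain ⟨hu2, hu'', -, -, hu_pos, hu_even, -, -⟩ := hu
  have hanti : StrictAntiOn (deriv u) (Icc 0 1) := by
    refine strictAntiOn_of_deriv_neg (convex_Icc 0 1) (hu2.continuous_deriv one_le_two).continuousOn
      fun t ht => ?_
    rw [interior_Icc] at ht
    have ht' : t ∈ Ioo (-1 : ℝ) 1 := ⟨by linarith [ht.1], ht.2⟩
    rw [hu'' t ht', neg_lt_zero]
    exact rpow_pos_of_pos (hu_pos t ht') p
  calc deriv u 1 < deriv u 0 :=
        hanti (left_mem_Icc.2 zero_le_one) (right_mem_Icc.2 zero_le_one) one_pos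
    _ = 0 := Function.Even.deriv_zero hu_even

lemma IsLaneEmden.abs_sub_mul_rpow_le {p : ℝ} {u : ℝ → ℝ} (hp : 1 < p) (hu : IsLaneEmden p u)
    (lam : ℝ) : ∀ t ∈ Ioo (-1 : ℝ) 1, |lam - p * u t ^ (p - 1)| ≤ |lam| + p * u 0 ^ (p - 1) := by
  obtain ⟨-, -, -, -, hu_pos, -, -, hu_max⟩ := hu
  intro t ht
  have hut := hu_pos t ht
  have hpow : u t ^ (p - 1) ≤ u 0 ^ (p - 1) :=
    rpow_le_rpow hut.le (hu_max t (Ioo_subset_Icc_self ht)) (by linarith)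
  have hnonneg : 0 ≤ p * u t ^ (p - 1) := by positivity
  calc |lam - p * u t ^ (p - 1)| ≤ |lam| + |p * u t ^ (p - 1)| := abs_sub _ _
    _ ≤ |lam| + p * u 0 ^ (p - 1) := by
      rw [abs_of_nonneg hnonneg]
      gcongr

theorem auxiliary_solution_positive_general
    (p : ℝ) (hp : 1 < p) (u : ℝ → ℝ) (hu : IsLaneEmden p u)
    (α : ℝ) (hα : IsFirstEig p u α)
    (lam : ℝ) (hlamα : -α < lam)
    (h : ℝ → ℝ) (hh : ContDiff ℝ 2 h)
    (hheq : ∀ t ∈ Ioo (0 : ℝ) 1, deriv (deriv h) t = (lam - p * u t ^ (p - 1)) * h t)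
    (hh0 : deriv h 0 = 0) (hh1 : h 1 = -(deriv u 1)) :
    ∀ t ∈ Icc (0 : ℝ) 1, 0 < h t := by
  obtain ⟨g, hg, hg_even, hg_pos, hg''⟩ := hα.exists_even_eigenfunction hu.2.2.2.2.2.1
  have hsub : Ioo (0 : ℝ) 1 ⊆ Ioo (-1) 1 := Ioo_subset_Ioo_left (by norm_num)
  have hpos_of_pos : ∀ f : ℝ → ℝ, ContDiff ℝ 2 f →
      (∀ t ∈ Ioo (0 : ℝ) 1, deriv (deriv f) t = (lam - p * u t ^ (p - 1)) * f t) →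
      deriv f 0 = 0 → 0 < f 0 → ∀ t ∈ Icc (0 : ℝ) 1, 0 < f t := fun f hf hf'' hf'0 hf0 =>
    pos_of_pos_of_wronskian_nonpos (r := fun t => -(α + p * u t ^ (p - 1))) hf hg hf''
      (fun t ht => hg'' t (hsub ht)) (fun t _ => by linarith) (fun t ht => hg_pos t (hsub ht))
      (by simp [wronskian, hf'0, hg_even.deriv_zero]) hf0
  have hh1_pos : 0 < h 1 := by linarith [hu.deriv_one_neg]
  have h1_mem : (1 : ℝ) ∈ Icc 0 1 := right_mem_Icc.2 zero_le_one
  rcases lt_trichotomy 0 (h 0) with h0_pos | h0_zero | h0_neg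
  · exact hpos_of_pos h hh hheq hh0 h0_pos
  · have := eq_zero_of_deriv_deriv_eq_mul_of_eq_zero hh hheq
      (fun t ht => hu.abs_sub_mul_rpow_le hp lam t (hsub ht)) h0_zero.symm hh0 1 h1_mem
    linarith
  · have := hpos_of_pos (-h) hh.neg (fun t ht => by simp [deriv.neg', hheq t ht])
      (by simp [deriv.neg', hh0]) (by simpa using h0_neg) 1 h1_mem
    simp only [Pi.neg_apply, neg_pos] at this
    linarith

/-- Positivity of the solution `h` of the auxiliary problem
`h'' = (λ - p u_p^(p-1)) h`, `h'(0) = 0`, `h(1) = -u_p'(1)`, when `λ > -α₁(p)`. -/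
theorem auxiliary_solution_positive
    (p : ℝ) (hp : 1 < p) (u : ℝ → ℝ) (hu : IsLaneEmden p u)
    (α : ℝ) (hα : IsFirstEig p u α)
    (lam : ℝ) (hlam : 0 < lam) (hlamα : -α < lam)
    (h : ℝ → ℝ) (hh : ContDiff ℝ 2 h)
    (hheq : ∀ t ∈ Ioo (0 : ℝ) 1, deriv (deriv h) t = (lam - p * u t ^ (p - 1)) * h t)
    (hh0 : deriv h 0 = 0) (hh1 : h 1 = -(deriv u 1)) :
    ∀ t ∈ Icc (0 : ℝ) 1, 0 < h t :=
  auxiliary_solution_positive_general p hp u hu α hα lam hlamα h hh hheq hh0 hh1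
end
end

section
/- Fix λ with 0 < λ < π²/4. For p sufficiently close to 1 there exists t_p ∈ (0,1) with p·u_p^{p-1}(t_p) = λ, and any such choice of points satisfies t_p → 1 as p → 1⁺. -/
/-!
A Sturm comparison with `cos (π t / 2)` shows that the potential `u_p^(p-1)` of the linearised
equation must reach `π²/4`, so `u_p(0)^(p-1) ≥ π²/4` and `p u_p^(p-1)` runs from above `λ` at
`t = 0` down to `0` at `t = 1`, giving `t_p` by the intermediate value theorem. Concavity gives
`u_p(t) ≥ ε u_p(0)` for `t ≤ 1 - ε`, hence `p u_p^(p-1)(t) ≥ p ε^(p-1) π²/4 → π²/4 > λ` as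
`p → 1`, so for `p` close to `1` no solution lies in `[0, 1 - ε]`.
-/

open Real Set Filter Topology

noncomputable section

/-- The "Wronskian" of `u` and `cos (π t / 2)`, `W = u' cos (π t / 2) + (π / 2) u sin (π t / 2)`,
vanishes at `±1` and has derivative `cos (π t / 2) (u'' + π² u / 4)`. -/
theorem exists_mem_Ioo_deriv_deriv_add_pi_sq_div_four_mul_nonpos {u : ℝ → ℝ}
    (hu : Differentiable ℝ u) (hu' : Differentiable ℝ (deriv u)) (hm1 : u (-1) = 0)
    (h1 : u 1 = 0) : ∃ t ∈ Ioo (-1 : ℝ) 1, deriv (deriv u) t + π ^ 2 / 4 * u t ≤ 0 := by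
  by_contra! hpos
  set W : ℝ → ℝ := fun t => deriv u t * cos (π / 2 * t) + π / 2 * u t * sin (π / 2 * t)
  have hW : ∀ t, HasDerivAt W (cos (π / 2 * t) * (deriv (deriv u) t + π ^ 2 / 4 * u t)) t := by
    intro t
    have hlin : HasDerivAt (fun t : ℝ => π / 2 * t) (π / 2) t := by
      simpa using (hasDerivAt_id t).const_mul (π / 2)
    refine (((hu' t).hasDerivAt.mul ((hasDerivAt_cos _).comp t hlin)).add
      (((hu t).hasDerivAt.const_mul (π / 2)).mul ((hasDerivAt_sin _).comp t hlin))).congr_deriv ?_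
    simp only [Function.comp_apply]
    ring
  have hmono : StrictMonoOn W (Icc (-1) 1) := by
    refine strictMonoOn_of_deriv_pos (convex_Icc _ _)
      (continuous_iff_continuousAt.2 fun t => (hW t).continuousAt).continuousOn fun t ht => ?_
    rw [interior_Icc] at ht
    rw [(hW t).deriv]
    refine mul_pos (cos_pos_of_mem_Ioo ⟨?_, ?_⟩) (hpos t ht) <;> nlinarith [pi_pos, ht.1, ht.2]
  have hWm1 : W (-1) = 0 := by simp [W, hm1]
  have hW1 : W 1 = 0 := by simp [W, h1]
  simpa [hWm1, hW1] using hmono (by norm_num) (by norm_num) (by norm_num : (-1 : ℝ) < 1)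

theorem IsLaneEmden.pi_sq_div_four_le_rpow {p : ℝ} {u : ℝ → ℝ} (h : IsLaneEmden p u)
    (hp : 1 ≤ p) : π ^ 2 / 4 ≤ u 0 ^ (p - 1) := by
  obtain ⟨hC, hode, hm1, h1, hpos, -, -, hmax⟩ := h
  obtain ⟨t, ht, hneg⟩ := exists_mem_Ioo_deriv_deriv_add_pi_sq_div_four_mul_nonpos
    (hC.differentiable two_ne_zero) hC.differentiable_deriv_two hm1 h1
  have hut := hpos t ht
  have hsplit : u t ^ p = u t ^ (p - 1) * u t := by
    rw [← rpow_add_one hut.ne', sub_add_cancel]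
  have hle : u t ^ (p - 1) ≤ u 0 ^ (p - 1) :=
    rpow_le_rpow hut.le (hmax t (Ioo_subset_Icc_self ht)) (sub_nonneg.2 hp)
  rw [hode t ht, hsplit] at hneg
  nlinarith

theorem IsLaneEmden.concaveOn {p : ℝ} {u : ℝ → ℝ} (h : IsLaneEmden p u) :
    ConcaveOn ℝ (Icc (-1) 1) u := by
  obtain ⟨hC, hode, -, -, hpos, -, -, -⟩ := h
  refine concaveOn_of_deriv2_nonpos (convex_Icc _ _) hC.continuous.continuousOn
    (hC.differentiable two_ne_zero).differentiableOn hC.differentiable_deriv_two.differentiableOn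
    fun t ht => ?_
  rw [interior_Icc] at ht
  rw [Function.iterate_succ_apply, Function.iterate_one, hode t ht, neg_nonpos]
  exact rpow_nonneg (hpos t ht).le p

theorem IsLaneEmden.one_sub_mul_le {p : ℝ} {u : ℝ → ℝ} (h : IsLaneEmden p u) {s : ℝ}
    (hs : s ∈ Icc (0 : ℝ) 1) : (1 - s) * u 0 ≤ u s := by
  have := h.concaveOn.2 (by norm_num : (0 : ℝ) ∈ Icc (-1) 1) (by norm_num : (1 : ℝ) ∈ Icc (-1) 1)
    (sub_nonneg.2 hs.2) hs.1 (sub_add_cancel 1 s)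
  obtain ⟨-, -, -, h1, -⟩ := h
  simpa [h1] using this

theorem IsLaneEmden.exists_mem_Ioo_mul_rpow_eq {p : ℝ} {u : ℝ → ℝ} (h : IsLaneEmden p u)
    (hp : 1 < p) {lam : ℝ} (hlam0 : 0 < lam) (hlam : lam < p * u 0 ^ (p - 1)) :
    ∃ t ∈ Ioo (0 : ℝ) 1, p * u t ^ (p - 1) = lam := by
  obtain ⟨hC, -, -, h1, -⟩ := h
  have hcont : Continuous fun t => p * u t ^ (p - 1) :=
    continuous_const.mul ((continuous_rpow_const (sub_nonneg.2 hp.le)).comp hC.continuous)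
  have hu1 : p * u 1 ^ (p - 1) = 0 := by
    rw [h1, zero_rpow (sub_pos.2 hp).ne', mul_zero]
  exact intermediate_value_Ioo' zero_le_one hcont.continuousOn ⟨hu1 ▸ hlam0, hlam⟩

theorem IsLaneEmden.mul_rpow_mul_pi_sq_div_four_le {p : ℝ} {u : ℝ → ℝ} (h : IsLaneEmden p u)
    (hp : 1 ≤ p) {ε t : ℝ} (hε : 0 ≤ ε) (ht0 : 0 ≤ t) (ht : t ≤ 1 - ε) :
    p * ε ^ (p - 1) * (π ^ 2 / 4) ≤ p * u t ^ (p - 1) := by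
  have hs : 1 - ε ∈ Icc (0 : ℝ) 1 := ⟨ht0.trans ht, by linarith⟩
  have hsturm := h.pi_sq_div_four_le_rpow hp
  have hconc := h.one_sub_mul_le hs
  obtain ⟨-, -, -, -, hpos, -, hanti, -⟩ := h
  have hu0 : 0 ≤ u 0 := (hpos 0 (by norm_num)).le
  have hut : ε * u 0 ≤ u t := calc
    ε * u 0 = (1 - (1 - ε)) * u 0 := by ring
    _ ≤ u (1 - ε) := hconc
    _ ≤ u t := hanti ⟨ht0, ht.trans hs.2⟩ hs ht
  rw [mul_assoc]
  gcongr p * ?_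
  calc ε ^ (p - 1) * (π ^ 2 / 4) ≤ ε ^ (p - 1) * u 0 ^ (p - 1) := by gcongr
    _ = (ε * u 0) ^ (p - 1) := (mul_rpow hε hu0).symm
    _ ≤ u t ^ (p - 1) := rpow_le_rpow (by positivity) hut (sub_nonneg.2 hp)

theorem eventually_lt_mul_rpow_sub_one_mul {ε c lam : ℝ} (hε : 0 < ε) (hlam : lam < c) :
    ∀ᶠ p in 𝓝 1, lam < p * ε ^ (p - 1) * c := by
  have hcont : ContinuousAt (fun p : ℝ => p * ε ^ (p - 1) * c) 1 :=
    (continuousAt_id.mul ((continuousAt_const_rpow hε.ne').comp (continuousAt_id.sub_const 1))).mul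
      continuousAt_const
  exact hcont.eventually (eventually_gt_nhds (by simpa using hlam))

/-- For `0 < λ < π²/4` and `p` close to `1` there is `t_p ∈ (0,1)` with
`p u_p^(p-1)(t_p) = λ`, and any such points satisfy `t_p → 1` as `p → 1⁺`. -/
theorem inflection_points_tend_to_one
    (u : ℝ → ℝ → ℝ) (hu : ∀ p : ℝ, 1 < p → IsLaneEmden p (u p))
    (lam : ℝ) (hlam0 : 0 < lam) (hlam : lam < π ^ 2 / 4) :
    (∃ δ > (0 : ℝ), ∀ p : ℝ, 1 < p → p < 1 + δ →
      ∃ t ∈ Ioo (0 : ℝ) 1, p * u p t ^ (p - 1) = lam) ∧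
    (∀ ε > (0 : ℝ), ∃ δ > (0 : ℝ), ∀ p : ℝ, 1 < p → p < 1 + δ →
      ∀ t ∈ Ioo (0 : ℝ) 1, p * u p t ^ (p - 1) = lam → 1 - ε < t) := by
  refine ⟨⟨1, one_pos, fun p hp _ => (hu p hp).exists_mem_Ioo_mul_rpow_eq hp hlam0 ?_⟩,
    fun ε hε => ?_⟩
  · have hsturm := (hu p hp).pi_sq_div_four_le_rpow hp.le
    calc lam < u p 0 ^ (p - 1) := hlam.trans_le hsturm
      _ < p * u p 0 ^ (p - 1) := lt_mul_of_one_lt_left (by linarith) hp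
  · obtain ⟨δ, hδ, hnear⟩ :=
      Metric.eventually_nhds_iff.1 (eventually_lt_mul_rpow_sub_one_mul hε hlam)
    refine ⟨δ, hδ, fun p hp hpδ t ht hpt => ?_⟩
    by_contra! hts
    have hlow := (hu p hp).mul_rpow_mul_pi_sq_div_four_le hp.le hε.le ht.1.le hts
    have hhigh := hnear (show dist p 1 < δ by rw [dist_eq, abs_of_pos (by linarith)]; linarith)
    linarith
end
end
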